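/- arXiv:2307.13421 — 4 statements merged into one kernel-verified Lean document; each statement's English description precedes it below -/
import Mathlib

section
/- Fix positive integers d, m and C ≥ 2, a label y ∈ {1,…,C}, segments x_1,…,x_m ∈ ℝ^d and a matrix W ∈ ℝ^{C×d} with rows w_1,…,w_C. Then the map u ↦ L^SA(W,u) = −log σ_y(W x̃), where a_j = σ_j(⟨u,x_1⟩,…,⟨u,x_m⟩) and x̃ = Σ_j a_j x_j, is differentiable everywhere on ℝ^d and its gradient is ∇_u L^SA(W,u) = −Σ_{j=1}^m a_j ⟨x_j, w_y − Σ_{k=1}^C σ_k(W x̃) w_k⟩ (x_j − x̃). -/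
/-!
The loss is the composite of `z ↦ -log σ_y(⟪w_i, z⟫)_i` with the attention map `u ↦ x̃(u)`.
Writing `-log σ_y(z) = log ∑ exp z_l - z_y` shows that the outer map has gradient
`∑ σ_k w_k - w_y`, and `σ_k = exp (z_k - log ∑ exp z_l)` gives the softmax Jacobian, from which
the attention map has derivative `v ↦ ∑ a_j ⟪x_j - x̃, v⟫ x_j`. The gradient of the composite is
the adjoint of this derivative applied to the outer gradient, i.e. `∑ a_j ⟪x_j, g⟫ (x_j - x̃)`.
-/

open scoped RealInnerProductSpace BigOperators

noncomputable def softmax {ι : Type*} [Fintype ι] (z : ι → ℝ) (k : ι) : ℝ :=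
  Real.exp (z k) / ∑ l, Real.exp (z l)

open Real
open ContinuousLinearMap (proj)

section Softmax

variable {ι : Type*} [Fintype ι]

lemma sum_exp_pos [Nonempty ι] (z : ι → ℝ) : 0 < ∑ l, exp (z l) :=
  Finset.sum_pos (fun l _ => exp_pos (z l)) Finset.univ_nonempty

lemma softmax_eq_exp_sub_log [Nonempty ι] (z : ι → ℝ) (k : ι) :
    softmax z k = exp (z k - log (∑ l, exp (z l))) := by
  rw [exp_sub, exp_log (sum_exp_pos z), softmax]

lemma neg_log_softmax [Nonempty ι] (z : ι → ℝ) (k : ι) :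
    -log (softmax z k) = log (∑ l, exp (z l)) - z k := by
  rw [softmax_eq_exp_sub_log, log_exp, neg_sub]

lemma hasFDerivAt_log_sum_exp [Nonempty ι] (z : ι → ℝ) :
    HasFDerivAt (fun w : ι → ℝ => log (∑ l, exp (w l)))
      (∑ l, softmax z l • (proj l : (ι → ℝ) →L[ℝ] ℝ)) z := by
  have hsum := HasFDerivAt.fun_sum (u := Finset.univ) fun l _ => (hasFDerivAt_apply l z).exp
  refine (hsum.log (sum_exp_pos z).ne').congr_fderiv ?_
  ext v
  simp [softmax, div_eq_inv_mul, Finset.mul_sum, mul_assoc]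

lemma hasFDerivAt_softmax (z : ι → ℝ) (k : ι) :
    HasFDerivAt (fun w => softmax w k)
      (softmax z k • ((proj k : (ι → ℝ) →L[ℝ] ℝ) - ∑ l, softmax z l • proj l)) z := by
  have : Nonempty ι := ⟨k⟩
  have h := ((hasFDerivAt_apply k z).fun_sub (hasFDerivAt_log_sum_exp z)).exp
  simpa only [← softmax_eq_exp_sub_log] using h

end Softmax

variable {E : Type*} [NormedAddCommGroup E] [InnerProductSpace ℝ E]

lemma HasGradientAt.comp_hasFDerivAt {F : Type*} [NormedAddCommGroup F] [InnerProductSpace ℝ F]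
    [CompleteSpace E] [CompleteSpace F] {f : F → ℝ} {A : E → F} {g : F} {L : E →L[ℝ] F}
    {g' u : E} (hf : HasGradientAt f g (A u)) (hA : HasFDerivAt A L u)
    (hg' : ∀ v, ⟪g, L v⟫ = ⟪g', v⟫) : HasGradientAt (f ∘ A) g' u := by
  rw [hasGradientAt_iff_hasFDerivAt] at hf ⊢
  refine (hf.comp u hA).congr_fderiv ?_
  ext v
  simp [hg']

lemma hasGradientAt_neg_log_softmax_inner {ι : Type*} [Fintype ι] [CompleteSpace E]
    (W : ι → E) (y : ι) (z : E) :
    HasGradientAt (fun z => -log (softmax (fun i => ⟪W i, z⟫) y))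
      (∑ k, softmax (fun i => ⟪W i, z⟫) k • W k - W y) z := by
  have : Nonempty ι := ⟨y⟩
  let P : E →L[ℝ] ι → ℝ := ContinuousLinearMap.pi fun i => innerSL ℝ (W i)
  have h := ((hasFDerivAt_log_sum_exp (P z)).comp z P.hasFDerivAt).sub
    (innerSL ℝ (W y)).hasFDerivAt
  simp_rw [hasGradientAt_iff_hasFDerivAt, neg_log_softmax]
  refine h.congr_fderiv ?_
  ext v
  simp [P]

section Attention

variable {ι : Type*} [Fintype ι]

noncomputable def attentionWeights (x : ι → E) (u : E) : ι → ℝ :=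
  softmax fun j => ⟪u, x j⟫

noncomputable def attention (x : ι → E) (u : E) : E :=
  ∑ j, attentionWeights x u j • x j

lemma hasFDerivAt_attentionWeights (x : ι → E) (u : E) (j : ι) :
    HasFDerivAt (fun u => attentionWeights x u j)
      (attentionWeights x u j • innerSL ℝ (x j - attention x u)) u := by
  let S : E →L[ℝ] ι → ℝ := ContinuousLinearMap.pi fun l => innerSL ℝ (x l)
  have hS : ∀ u, attentionWeights x u = softmax (S u) := fun u => by
    ext l
    simp [attentionWeights, S, real_inner_comm]
  simp_rw [hS]
  refine ((hasFDerivAt_softmax (S u) j).comp u S.hasFDerivAt).congr_fderiv ?_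
  ext v
  simp [S, attention, hS, real_inner_comm]

lemma hasFDerivAt_attention (x : ι → E) (u : E) :
    HasFDerivAt (attention x)
      (∑ j, (attentionWeights x u j • innerSL ℝ (x j - attention x u)).smulRight (x j)) u :=
  HasFDerivAt.fun_sum fun j _ => (hasFDerivAt_attentionWeights x u j).smul_const (x j)

lemma HasGradientAt.comp_attention [CompleteSpace E] {f : E → ℝ} {g : E} {x : ι → E} {u : E}
    (hf : HasGradientAt f g (attention x u)) :
    HasGradientAt (f ∘ attention x)
      (∑ j, (attentionWeights x u j * ⟪x j, g⟫) • (x j - attention x u)) u := by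
  refine hf.comp_hasFDerivAt (hasFDerivAt_attention x u) fun v => ?_
  simp only [FunLike.coe_sum, Finset.sum_apply, ContinuousLinearMap.smulRight_apply,
    smul_apply, innerSL_apply_apply, inner_sum, sum_inner, real_inner_smul_left,
    real_inner_smul_right, smul_eq_mul]
  refine Finset.sum_congr rfl fun j _ => ?_
  rw [real_inner_comm g]
  ring

end Attention

theorem soft_attention_grad_u_general (d m C : ℕ)
    (y : Fin C) (x : Fin m → EuclideanSpace ℝ (Fin d))
    (W : Fin C → EuclideanSpace ℝ (Fin d))
    (u : EuclideanSpace ℝ (Fin d))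
    (a : Fin m → ℝ) (ha : a = softmax fun j => ⟪u, x j⟫)
    (xt : EuclideanSpace ℝ (Fin d)) (hxt : xt = ∑ j, a j • x j) :
    HasGradientAt
      (fun u' : EuclideanSpace ℝ (Fin d) =>
        -Real.log (softmax (fun i =>
          ⟪W i, ∑ j, softmax (fun j' => ⟪u', x j'⟫) j • x j⟫) y))
      (-(∑ j, (a j * ⟪x j, W y - ∑ k, softmax (fun i => ⟪W i, xt⟫) k • W k⟫) •
          (x j - xt)))
      u := by
  obtain rfl : a = attentionWeights x u := ha
  obtain rfl : xt = attention x u := hxt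
  convert (hasGradientAt_neg_log_softmax_inner W y (attention x u)).comp_attention using 1
  · rfl
  rw [← Finset.sum_neg_distrib]
  refine Finset.sum_congr rfl fun j _ => ?_
  rw [← neg_sub, inner_neg_right, mul_neg, neg_smul, neg_neg]

/-- the soft-attention loss, as a function of the focus vector `u`, is
differentiable everywhere on `ℝ^d` with the stated gradient. -/
theorem soft_attention_grad_u (d m C : ℕ) (hd : 0 < d) (hm : 0 < m) (hC : 2 ≤ C)
    (y : Fin C) (x : Fin m → EuclideanSpace ℝ (Fin d))
    (W : Fin C → EuclideanSpace ℝ (Fin d))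
    (u : EuclideanSpace ℝ (Fin d))
    (a : Fin m → ℝ) (ha : a = softmax fun j => ⟪u, x j⟫)
    (xt : EuclideanSpace ℝ (Fin d)) (hxt : xt = ∑ j, a j • x j) :
    HasGradientAt
      (fun u' : EuclideanSpace ℝ (Fin d) =>
        -Real.log (softmax (fun i =>
          ⟪W i, ∑ j, softmax (fun j' => ⟪u', x j'⟫) j • x j⟫) y))
      (-(∑ j, (a j * ⟪x j, W y - ∑ k, softmax (fun i => ⟪W i, xt⟫) k • W k⟫) •
          (x j - xt)))
      u :=
  soft_attention_grad_u_general d m C y x W u a ha xt hxt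
end

section
/- Fix positive integers d, m and C ≥ 2, a label y ∈ {1,…,C}, segments x_1,…,x_m ∈ ℝ^d and a matrix W ∈ ℝ^{C×d}. Then the map u ↦ L^LV(W,u) = −log( Σ_{j=1}^m a_j σ_y(W x_j) ), where a_j = σ_j(⟨u,x_1⟩,…,⟨u,x_m⟩), x̃ = Σ_j a_j x_j, and γ_j = a_j σ_y(W x_j)/Σ_{j'} a_{j'} σ_y(W x_{j'}), is differentiable everywhere on ℝ^d and its gradient is ∇_u L^LV(W,u) = −Σ_{j=1}^m γ_j (x_j − x̃). -/
open scoped RealInnerProductSpace BigOperators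

/-- the LVML loss, as a function of the focus vector `u`, is differentiable
everywhere on `ℝ^d` with gradient `−Σ_j γ_j (x_j − x̃)`. -/
theorem lvml_grad_u (d m C : ℕ) (hd : 0 < d) (hm : 0 < m) (hC : 2 ≤ C)
    (y : Fin C) (x : Fin m → EuclideanSpace ℝ (Fin d))
    (W : Fin C → EuclideanSpace ℝ (Fin d))
    (u : EuclideanSpace ℝ (Fin d))
    (a : Fin m → ℝ) (ha : a = softmax fun j => ⟪u, x j⟫)
    (xt : EuclideanSpace ℝ (Fin d)) (hxt : xt = ∑ j, a j • x j)
    (γ : Fin m → ℝ)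
    (hγ : γ = fun j => a j * softmax (fun i => ⟪W i, x j⟫) y /
      ∑ j', a j' * softmax (fun i => ⟪W i, x j'⟫) y) :
    HasGradientAt
      (fun u' : EuclideanSpace ℝ (Fin d) =>
        -Real.log (∑ j, softmax (fun j' => ⟪u', x j'⟫) j *
          softmax (fun i => ⟪W i, x j⟫) y))
      (-(∑ j, γ j • (x j - xt)))
      u := by
  classical
  haveI : Nonempty (Fin m) := ⟨⟨0, hm⟩⟩
  haveI : Nonempty (Fin C) := ⟨⟨0, by omega⟩⟩
  set c : Fin m → ℝ := fun j => softmax (fun i => ⟪W i, x j⟫) y with hc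
  have hcpos : ∀ j, 0 < c j := by
    intro j
    rw [hc]
    exact div_pos (Real.exp_pos _)
      (Finset.sum_pos (fun l _ => Real.exp_pos _) Finset.univ_nonempty)
  set D : EuclideanSpace ℝ (Fin d) → ℝ := fun v => ∑ l, Real.exp ⟪v, x l⟫ with hD
  set N : EuclideanSpace ℝ (Fin d) → ℝ := fun v => ∑ j, c j * Real.exp ⟪v, x j⟫ with hN
  have hDpos : ∀ v, 0 < D v := fun v =>
    Finset.sum_pos (fun l _ => Real.exp_pos _) Finset.univ_nonempty
  have hNpos : ∀ v, 0 < N v := fun v =>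
    Finset.sum_pos (fun j _ => mul_pos (hcpos j) (Real.exp_pos _)) Finset.univ_nonempty
  -- pointwise identity for the loss
  have hfun : ∀ v : EuclideanSpace ℝ (Fin d),
      (Real.log (D v) - Real.log (N v)) =
      -Real.log (∑ j, softmax (fun j' => ⟪v, x j'⟫) j * softmax (fun i => ⟪W i, x j⟫) y) := by
    intro v
    have hsum : (∑ j, softmax (fun j' => ⟪v, x j'⟫) j * softmax (fun i => ⟪W i, x j⟫) y)
        = N v / D v := by
      rw [hN, Finset.sum_div]
      refine Finset.sum_congr rfl fun j _ => ?_
      simp only [hc, softmax, hD]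
      ring
    rw [hsum, Real.log_div (hNpos v).ne' (hDpos v).ne']
    ring
  -- linear maps
  set L : Fin m → (EuclideanSpace ℝ (Fin d) →L[ℝ] ℝ) :=
    fun j => InnerProductSpace.toDual ℝ (EuclideanSpace ℝ (Fin d)) (x j) with hL
  have hlin : ∀ j, HasFDerivAt (fun v : EuclideanSpace ℝ (Fin d) => ⟪v, x j⟫) (L j) u := by
    intro j
    have h : (fun v : EuclideanSpace ℝ (Fin d) => ⟪v, x j⟫)
        = (L j : EuclideanSpace ℝ (Fin d) →L[ℝ] ℝ) := by
      ext v; simp [hL, InnerProductSpace.toDual_apply_apply, real_inner_comm, mul_comm]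
    rw [h]; exact (L j).hasFDerivAt
  have hexp : ∀ j, HasFDerivAt (fun v : EuclideanSpace ℝ (Fin d) => Real.exp ⟪v, x j⟫)
      (Real.exp ⟪u, x j⟫ • L j) u := fun j => (hlin j).exp
  have hDderiv : HasFDerivAt D (∑ l, Real.exp ⟪u, x l⟫ • L l) u := by
    rw [hD]; exact HasFDerivAt.fun_sum fun l _ => hexp l
  have hNderiv : HasFDerivAt N (∑ j, c j • (Real.exp ⟪u, x j⟫ • L j)) u := by
    rw [hN]; exact HasFDerivAt.fun_sum fun j _ => (hexp j).const_mul (c j)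
  have hlogD : HasFDerivAt (fun v => Real.log (D v))
      ((D u)⁻¹ • ∑ l, Real.exp ⟪u, x l⟫ • L l) u := hDderiv.log (hDpos u).ne'
  have hlogN : HasFDerivAt (fun v => Real.log (N v))
      ((N u)⁻¹ • ∑ j, c j • (Real.exp ⟪u, x j⟫ • L j)) u := hNderiv.log (hNpos u).ne'
  have hF : HasFDerivAt (fun v => Real.log (D v) - Real.log (N v))
      ((D u)⁻¹ • (∑ l, Real.exp ⟪u, x l⟫ • L l)
        - (N u)⁻¹ • (∑ j, c j • (Real.exp ⟪u, x j⟫ • L j))) u := hlogD.sub hlogN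
  -- scalar facts
  have haj : ∀ j, a j = Real.exp ⟪u, x j⟫ / D u := by
    intro j; rw [ha]; simp only [softmax, hD]
  have hγj : ∀ j, γ j = c j * Real.exp ⟪u, x j⟫ / N u := by
    intro j
    have hS : (∑ j', a j' * softmax (fun i => ⟪W i, x j'⟫) y) = N u / D u := by
      rw [hN, Finset.sum_div]
      refine Finset.sum_congr rfl fun j' _ => ?_
      simp only [hc]
      rw [haj j']
      ring
    rw [hγ]
    simp only [hS, hc]
    rw [haj j]
    have hD0 : D u ≠ 0 := (hDpos u).ne'
    have hN0 : N u ≠ 0 := (hNpos u).ne'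
    field_simp
  have hsumγ : (∑ j, γ j) = 1 := by
    have h1 : (∑ j, γ j) = (∑ j, c j * Real.exp ⟪u, x j⟫) / N u := by
      rw [Finset.sum_div]
      exact Finset.sum_congr rfl fun j _ => hγj j
    rw [h1, hN, div_self (hNpos u).ne']
  -- the vector identity
  have hvec : -(∑ j, γ j • (x j - xt)) =
      (D u)⁻¹ • (∑ l, Real.exp ⟪u, x l⟫ • x l)
        - (N u)⁻¹ • (∑ j, c j • (Real.exp ⟪u, x j⟫ • x j)) := by
    have hxt' : (D u)⁻¹ • (∑ l, Real.exp ⟪u, x l⟫ • x l) = xt := by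
      rw [hxt, Finset.smul_sum]
      refine Finset.sum_congr rfl fun j _ => ?_
      rw [haj j, smul_smul, div_eq_inv_mul]
    have hsecond : (N u)⁻¹ • (∑ j, c j • (Real.exp ⟪u, x j⟫ • x j)) = ∑ j, γ j • x j := by
      rw [Finset.smul_sum]
      refine Finset.sum_congr rfl fun j _ => ?_
      rw [smul_smul, smul_smul, hγj j]
      congr 1
      rw [div_eq_inv_mul]
      ring
    rw [hxt', hsecond]
    have h2 : (∑ j, γ j • (x j - xt)) = (∑ j, γ j • x j) - xt := by
      conv_rhs => rw [← one_smul ℝ xt, ← hsumγ, Finset.sum_smul]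
      rw [← Finset.sum_sub_distrib]
      exact Finset.sum_congr rfl fun j _ => smul_sub _ _ _
    rw [h2]; abel
  -- conclude
  rw [hasGradientAt_iff_hasFDerivAt]
  have hdual : (InnerProductSpace.toDual ℝ (EuclideanSpace ℝ (Fin d)))
        (-(∑ j, γ j • (x j - xt))) =
      (D u)⁻¹ • (∑ l, Real.exp ⟪u, x l⟫ • L l)
        - (N u)⁻¹ • (∑ j, c j • (Real.exp ⟪u, x j⟫ • L j)) := by
    rw [hvec]
    simp only [map_sub, map_sum, map_smulₛₗ, starRingEnd_apply, star_trivial, hL]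
  rw [hdual]
  exact hF.congr_of_eventuallyEq (Filter.Eventually.of_forall fun v => (hfun v).symm)
end

section
/- Fix integers d ≥ 1, C ≥ 2, m ≥ 2, orthonormal vectors s_1,…,s_C ∈ ℝ^d, and α ∈ (0,1]. Then for every ε > 0 there exists a matrix W ∈ ℝ^{C×d} such that for ALL vectors b_1,…,b_{m−1} ∈ ℝ^d orthogonal to each of s_1,…,s_C, (1/C) Σ_{y=1}^C −log σ_y( W ( α s_y + ((1−α)/(m−1)) Σ_{j=1}^{m−1} b_j ) ) < ε. (A witness is W = μ D for μ large, where D is the matrix with k-th row s_k − (1/C) Σ_{k'} s_{k'}; the loss then equals log(1 + (C−1)exp(−αμ)).) Hence, in contrast to hard attention, the fixed-focus soft-attention loss can be driven arbitrarily close to 0 for any focus level α > 0. -/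
open scoped RealInnerProductSpace BigOperators

open Filter Topology

/-!
Take `W i = μ • s i`. Orthogonality of the backgrounds to the foreground directions makes the
logits one-hot, `⟪W i, α • s y + v⟫ = if i = y then μ * α else 0`, whatever the backgrounds are,
so every per-label loss equals `log (1 + (C - 1) * exp (-(μ * α)))`, which tends to `0` as
`μ → ∞` because `α > 0`.
-/

lemma inner_smul_orthonormal_add_of_inner_eq_zero {ι E : Type*} [DecidableEq ι]
    [NormedAddCommGroup E] [InnerProductSpace ℝ E] {s : ι → E} (hs : Orthonormal ℝ s)
    {v : E} (hv : ∀ k, ⟪v, s k⟫ = 0) (μ α : ℝ) (i y : ι) :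
    ⟪μ • s i, α • s y + v⟫ = if i = y then μ * α else 0 := by
  rw [real_inner_smul_left, inner_add_right, real_inner_smul_right, real_inner_comm v,
    hv i, orthonormal_iff_ite.mp hs i y]
  split_ifs <;> ring

lemma sum_exp_ite_eq {ι : Type*} [Fintype ι] [DecidableEq ι] (a : ℝ) (y : ι) :
    ∑ l, Real.exp (if l = y then a else 0) = Real.exp a + (Fintype.card ι - 1) := by
  rw [← Finset.add_sum_erase _ _ (Finset.mem_univ y), if_pos rfl,
    Finset.sum_congr rfl fun l hl => by rw [if_neg (Finset.ne_of_mem_erase hl), Real.exp_zero],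
    Finset.sum_const, Finset.card_erase_of_mem (Finset.mem_univ y), Finset.card_univ,
    nsmul_one, Nat.cast_pred (Fintype.card_pos_iff.mpr ⟨y⟩)]

lemma neg_log_softmax_ite_self {ι : Type*} [Fintype ι] [DecidableEq ι] (a : ℝ) (y : ι) :
    -Real.log (softmax (fun i => if i = y then a else 0) y) =
      Real.log (1 + (Fintype.card ι - 1) * Real.exp (-a)) := by
  have hsplit : 1 + (Fintype.card ι - 1) * Real.exp (-a) =
      (Real.exp a + (Fintype.card ι - 1)) / Real.exp a := by
    rw [Real.exp_neg]; field_simp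
  rw [softmax, if_pos rfl, sum_exp_ite_eq, hsplit, ← Real.log_inv, inv_div]

lemma tendsto_log_one_add_mul_exp_neg (c : ℝ) :
    Tendsto (fun a => Real.log (1 + c * Real.exp (-a))) atTop (𝓝 0) := by
  have h : Tendsto (fun a => 1 + c * Real.exp (-a)) atTop (𝓝 1) := by
    simpa using (Real.tendsto_exp_neg_atTop_nhds_zero.const_mul c).const_add 1
  simpa using h.log one_ne_zero

theorem fixed_focus_soft_attention_loss_arbitrarily_small_general
    (d C m : ℕ) (hC : 2 ≤ C)
    (s : Fin C → EuclideanSpace ℝ (Fin d)) (hs : Orthonormal ℝ s)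
    (α : ℝ) (hα : α ∈ Set.Ioc (0 : ℝ) 1) :
    ∀ ε > 0, ∃ W : Fin C → EuclideanSpace ℝ (Fin d),
      ∀ b : Fin (m - 1) → EuclideanSpace ℝ (Fin d),
        (∀ j k, ⟪b j, s k⟫ = 0) →
        (C : ℝ)⁻¹ * ∑ y : Fin C,
          -Real.log (softmax (fun i =>
            ⟪W i, α • s y + ((1 - α) / ((m : ℝ) - 1)) • ∑ j, b j⟫) y) < ε := by
  intro ε hε
  obtain ⟨a, ha⟩ :=
    ((tendsto_log_one_add_mul_exp_neg ((C : ℝ) - 1)).eventually (gt_mem_nhds hε)).exists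
  refine ⟨fun i => (a / α) • s i, fun b hb => ?_⟩
  have hbackground : ∀ k, ⟪((1 - α) / ((m : ℝ) - 1)) • ∑ j, b j, s k⟫ = 0 := fun k => by
    simp [real_inner_smul_left, sum_inner, hb]
  have hlogits : a / α * α = a := div_mul_cancel₀ a hα.1.ne'
  simp only [inner_smul_orthonormal_add_of_inner_eq_zero hs hbackground, hlogits,
    neg_log_softmax_ite_self, Fintype.card_fin, Finset.sum_const, Finset.card_univ, nsmul_eq_mul]
  rwa [inv_mul_cancel_left₀ (Nat.cast_ne_zero.mpr (by omega))]

/-- for any focus level `α > 0`, the fixed-focus soft-attention loss can be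
driven arbitrarily close to `0`, uniformly over all background segments orthogonal to the
foreground directions. -/
theorem fixed_focus_soft_attention_loss_arbitrarily_small
    (d C m : ℕ) (hd : 1 ≤ d) (hC : 2 ≤ C) (hm : 2 ≤ m)
    (s : Fin C → EuclideanSpace ℝ (Fin d)) (hs : Orthonormal ℝ s)
    (α : ℝ) (hα : α ∈ Set.Ioc (0 : ℝ) 1) :
    ∀ ε > 0, ∃ W : Fin C → EuclideanSpace ℝ (Fin d),
      ∀ b : Fin (m - 1) → EuclideanSpace ℝ (Fin d),
        (∀ j k, ⟪b j, s k⟫ = 0) →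
        (C : ℝ)⁻¹ * ∑ y : Fin C,
          -Real.log (softmax (fun i =>
            ⟪W i, α • s y + ((1 - α) / ((m : ℝ) - 1)) • ∑ j, b j⟫) y) < ε :=
  fixed_focus_soft_attention_loss_arbitrarily_small_general d C m hC s hs α hα
end

section
/- Fix an integer C ≥ 2 and α ∈ (0,1]. Let μ : [0,∞) → ℝ be differentiable with μ(0) = 0 and suppose μ satisfies any one of the three fixed-focus scalar ODEs: (i) μ'(t) = α / ( exp(α μ(t)) + C − 1 ) (soft attention); (ii) μ'(t) = α β(t) / exp(μ(t)) with β(t) = exp(μ(t))/(exp(μ(t))+C−1) (hard attention); (iii) μ'(t) = α β(t)^2 / ( Z(t) exp(μ(t)) ) with β(t) as in (ii) and Z(t) = α β(t) + (1−α)/C (LVML). Then in each case μ is strictly increasing on [0,∞) and unbounded, i.e., μ(t) → ∞ as t → ∞. In particular, in the linear-orthogonal setting the gradient-flow trajectories of all three fixed-focus losses from zero initialization converge in direction to the same ideal classifier, differing only in the scalar multiple μ(t). -/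
/-!
All three right-hand sides have the autonomous form `μ' = F μ` with `F` continuous and
everywhere positive. Positivity of `μ'` makes `μ` strictly increasing. If `μ` stayed below
some `M`, it would range over the compact interval `[μ a, M]`, where `F` has a positive
minimum `ε`; then `μ t ≥ μ a + ε (t - a)`, which eventually exceeds `M`.
-/

open Filter Set

section AutonomousODE

variable {f f' : ℝ → ℝ} {a : ℝ}

lemma continuousOn_Ici_of_hasDerivAt (hf : ∀ t, a ≤ t → HasDerivAt f (f' t) t) :
    ContinuousOn f (Ici a) :=
  fun t ht => (hf t ht).continuousAt.continuousWithinAt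

lemma strictMonoOn_Ici_of_hasDerivAt_pos (hf : ∀ t, a ≤ t → HasDerivAt f (f' t) t)
    (hpos : ∀ t, a ≤ t → 0 < f' t) : StrictMonoOn f (Ici a) := by
  refine strictMonoOn_of_deriv_pos (convex_Ici a) (continuousOn_Ici_of_hasDerivAt hf) ?_
  intro t ht
  rw [interior_Ici] at ht
  rw [(hf t ht.le).deriv]
  exact hpos t ht.le

lemma add_mul_sub_le_of_hasDerivAt_ge {ε : ℝ} (hf : ∀ t, a ≤ t → HasDerivAt f (f' t) t)
    (hε : ∀ t, a ≤ t → ε ≤ f' t) {t : ℝ} (ht : a ≤ t) : f a + ε * (t - a) ≤ f t := by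
  have hderiv : ∀ s ∈ interior (Ici a), ε ≤ deriv f s := by
    intro s hs
    rw [interior_Ici] at hs
    rw [(hf s hs.le).deriv]
    exact hε s hs.le
  have hdiff : DifferentiableOn ℝ f (interior (Ici a)) := by
    intro s hs
    rw [interior_Ici] at hs
    exact (hf s hs.le).differentiableAt.differentiableWithinAt
  have := (convex_Ici a).mul_sub_le_image_sub_of_le_deriv
    (continuousOn_Ici_of_hasDerivAt hf) hdiff hderiv a self_mem_Ici t ht ht
  linarith

variable {F μ : ℝ → ℝ}

lemma exists_lt_of_hasDerivAt_comp (hF : Continuous F) (hFpos : ∀ x, 0 < F x)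
    (hμ : ∀ t, a ≤ t → HasDerivAt μ (F (μ t)) t) (hmono : MonotoneOn μ (Ici a)) (M : ℝ) :
    ∃ t, a ≤ t ∧ M < μ t := by
  by_contra! hbdd
  obtain ⟨x₀, -, hx₀⟩ := isCompact_Icc.exists_isMinOn (nonempty_Icc.2 (hbdd a le_rfl))
    hF.continuousOn
  have hε : ∀ t, a ≤ t → F x₀ ≤ F (μ t) := fun t ht =>
    hx₀ ⟨hmono self_mem_Ici ht ht, hbdd t ht⟩
  set T := a + (M - μ a + 1) / F x₀
  have haT : a ≤ T := by
    have : μ a ≤ M := hbdd a le_rfl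
    have := hFpos x₀
    simp only [T, le_add_iff_nonneg_right]
    positivity
  have hgrowth := add_mul_sub_le_of_hasDerivAt_ge hμ hε haT
  have hT : F x₀ * (T - a) = M - μ a + 1 := by
    simp only [T, add_sub_cancel_left]
    field_simp [(hFpos x₀).ne']
  linarith [hbdd T haT]

theorem strictMonoOn_Ici_and_tendsto_atTop_of_hasDerivAt_comp (hF : Continuous F)
    (hFpos : ∀ x, 0 < F x) (hμ : ∀ t, a ≤ t → HasDerivAt μ (F (μ t)) t) :
    StrictMonoOn μ (Ici a) ∧ Tendsto μ atTop atTop := by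
  have hmono := strictMonoOn_Ici_of_hasDerivAt_pos hμ fun t _ => hFpos (μ t)
  refine ⟨hmono, tendsto_atTop_atTop.2 fun M => ?_⟩
  obtain ⟨t, hat, hMt⟩ := exists_lt_of_hasDerivAt_comp hF hFpos hμ hmono.monotoneOn M
  exact ⟨t, fun s hts => hMt.le.trans (hmono.monotoneOn hat (hat.trans hts) hts)⟩

end AutonomousODE

section FixedFocusRates

variable {C : ℕ} {α : ℝ}

lemma exp_add_natCast_sub_one_pos (hC : 1 ≤ C) (x : ℝ) : 0 < Real.exp x + C - 1 := by
  have : (1 : ℝ) ≤ C := by exact_mod_cast hC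
  linarith [Real.exp_pos x]

/-- The paper's `β`: the softmax weight `eˣ / (eˣ + C - 1)` of the correct class. -/
noncomputable def softmaxWeight (C : ℕ) (x : ℝ) : ℝ := Real.exp x / (Real.exp x + C - 1)

/-- The paper's `Z = α β + (1 - α) / C`. -/
noncomputable def lvmlNormalizer (C : ℕ) (α x : ℝ) : ℝ := α * softmaxWeight C x + (1 - α) / C

noncomputable def softAttentionRate (C : ℕ) (α x : ℝ) : ℝ := α / (Real.exp (α * x) + C - 1)

noncomputable def hardAttentionRate (C : ℕ) (α x : ℝ) : ℝ := α * softmaxWeight C x / Real.exp x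

noncomputable def lvmlRate (C : ℕ) (α x : ℝ) : ℝ :=
  α * softmaxWeight C x ^ 2 / (lvmlNormalizer C α x * Real.exp x)

lemma softmaxWeight_pos (hC : 1 ≤ C) (x : ℝ) : 0 < softmaxWeight C x :=
  div_pos (Real.exp_pos x) (exp_add_natCast_sub_one_pos hC x)

lemma continuous_softmaxWeight (hC : 1 ≤ C) : Continuous (softmaxWeight C) :=
  Real.continuous_exp.div (by fun_prop) fun x => (exp_add_natCast_sub_one_pos hC x).ne'

lemma lvmlNormalizer_pos (hC : 1 ≤ C) (hα : α ∈ Ioc (0 : ℝ) 1) (x : ℝ) :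
    0 < lvmlNormalizer C α x := by
  have := softmaxWeight_pos hC x
  have := sub_nonneg.2 hα.2
  have := hα.1
  unfold lvmlNormalizer
  positivity

lemma softAttentionRate_pos (hC : 1 ≤ C) (hα : 0 < α) (x : ℝ) : 0 < softAttentionRate C α x :=
  div_pos hα (exp_add_natCast_sub_one_pos hC _)

lemma hardAttentionRate_pos (hC : 1 ≤ C) (hα : 0 < α) (x : ℝ) : 0 < hardAttentionRate C α x :=
  div_pos (mul_pos hα (softmaxWeight_pos hC x)) (Real.exp_pos x)

lemma lvmlRate_pos (hC : 1 ≤ C) (hα : α ∈ Ioc (0 : ℝ) 1) (x : ℝ) : 0 < lvmlRate C α x :=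
  div_pos (mul_pos hα.1 (pow_pos (softmaxWeight_pos hC x) 2))
    (mul_pos (lvmlNormalizer_pos hC hα x) (Real.exp_pos x))

lemma continuous_softAttentionRate (hC : 1 ≤ C) : Continuous (softAttentionRate C α) :=
  continuous_const.div (by fun_prop) fun x => (exp_add_natCast_sub_one_pos hC _).ne'

lemma continuous_hardAttentionRate (hC : 1 ≤ C) : Continuous (hardAttentionRate C α) :=
  (continuous_const.mul (continuous_softmaxWeight hC)).div Real.continuous_exp
    fun x => (Real.exp_pos x).ne'

lemma continuous_lvmlRate (hC : 1 ≤ C) (hα : α ∈ Ioc (0 : ℝ) 1) :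
    Continuous (lvmlRate C α) := by
  have hβ := continuous_softmaxWeight hC
  have hZ : Continuous (lvmlNormalizer C α) := by unfold lvmlNormalizer; fun_prop
  exact Continuous.div (by fun_prop) (by fun_prop) fun x =>
    (mul_pos (lvmlNormalizer_pos hC hα x) (Real.exp_pos x)).ne'

end FixedFocusRates

theorem fixed_focus_scalar_ode_strict_mono_unbounded_general
    (C : ℕ) (hC : 2 ≤ C) (α : ℝ) (hα : α ∈ Set.Ioc (0 : ℝ) 1)
    (μ : ℝ → ℝ)
    (hODE :
      (∀ t, 0 ≤ t → HasDerivAt μ (α / (Real.exp (α * μ t) + C - 1)) t) ∨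
      (∀ t, 0 ≤ t → HasDerivAt μ
        (α * (Real.exp (μ t) / (Real.exp (μ t) + C - 1)) / Real.exp (μ t)) t) ∨
      (∀ t, 0 ≤ t → HasDerivAt μ
        (α * (Real.exp (μ t) / (Real.exp (μ t) + C - 1)) ^ 2 /
          ((α * (Real.exp (μ t) / (Real.exp (μ t) + C - 1)) + (1 - α) / C) *
            Real.exp (μ t))) t)) :
    StrictMonoOn μ (Set.Ici (0 : ℝ)) ∧ Tendsto μ atTop atTop := by
  have hC1 : 1 ≤ C := by omega
  rcases hODE with hsoft | hhard | hlvml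
  · exact strictMonoOn_Ici_and_tendsto_atTop_of_hasDerivAt_comp
      (continuous_softAttentionRate hC1) (softAttentionRate_pos hC1 hα.1) hsoft
  · exact strictMonoOn_Ici_and_tendsto_atTop_of_hasDerivAt_comp
      (continuous_hardAttentionRate hC1) (hardAttentionRate_pos hC1 hα.1) hhard
  · exact strictMonoOn_Ici_and_tendsto_atTop_of_hasDerivAt_comp
      (continuous_lvmlRate hC1 hα) (lvmlRate_pos hC1 hα) hlvml

/-- any solution `μ` of one of the three fixed-focus scalar ODEs
(soft attention, hard attention, LVML) with `μ(0) = 0` is strictly increasing on `[0,∞)`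
and unbounded, i.e. `μ(t) → ∞` as `t → ∞`. -/
theorem fixed_focus_scalar_ode_strict_mono_unbounded
    (C : ℕ) (hC : 2 ≤ C) (α : ℝ) (hα : α ∈ Set.Ioc (0 : ℝ) 1)
    (μ : ℝ → ℝ) (hμ0 : μ 0 = 0)
    (hODE :
      (∀ t, 0 ≤ t → HasDerivAt μ (α / (Real.exp (α * μ t) + C - 1)) t) ∨
      (∀ t, 0 ≤ t → HasDerivAt μ
        (α * (Real.exp (μ t) / (Real.exp (μ t) + C - 1)) / Real.exp (μ t)) t) ∨
      (∀ t, 0 ≤ t → HasDerivAt μ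
        (α * (Real.exp (μ t) / (Real.exp (μ t) + C - 1)) ^ 2 /
          ((α * (Real.exp (μ t) / (Real.exp (μ t) + C - 1)) + (1 - α) / C) *
            Real.exp (μ t))) t)) :
    StrictMonoOn μ (Set.Ici (0 : ℝ)) ∧ Tendsto μ atTop atTop :=
  fixed_focus_scalar_ode_strict_mono_unbounded_general C hC α hα μ hODE
end
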